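/- Let R ⊆ [0,∞) be a countable set with 0 ∈ R which satisfies the 4-values condition. Then there exists a countable universal metric space U with dist(U) = R. -/

import Mathlib

/-- The set of distances realized in a metric space. -/
def distSet (X : Type*) [MetricSpace X] : Set ℝ :=
  {r : ℝ | ∃ x y : X, dist x y = r}

/-- A metric space is homogeneous if every isometry from a finite subset into the
space extends to a bijective self-isometry. -/
def IsHomogeneous (X : Type*) [MetricSpace X] : Prop :=
  ∀ F : Set X, F.Finite →
    ∀ f : F → X, (∀ x y : F, dist (f x) (f y) = dist (x : X) (y : X)) →
      ∃ g : X ≃ᵢ X, ∀ x : F, g (x : X) = f x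

/-- A metric space is universal if it is homogeneous and embeds isometrically every
finite metric space whose distances lie in its distance set. -/
def IsUniversal (X : Type*) [MetricSpace X] : Prop :=
  IsHomogeneous X ∧
    ∀ (F : Type) [MetricSpace F] [Finite F], distSet F ⊆ distSet X →
      ∃ f : F → X, ∀ a b : F, dist (f a) (f b) = dist a b

/-- An Urysohn metric space: homogeneous, separable, complete, and embedding every
separable metric space whose distances lie in its distance set. -/
def IsUrysohn (X : Type*) [MetricSpace X] : Prop :=
  IsHomogeneous X ∧ TopologicalSpace.SeparableSpace X ∧ CompleteSpace X ∧
    ∀ (N : Type) [MetricSpace N] [TopologicalSpace.SeparableSpace N],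
      distSet N ⊆ distSet X →
        ∃ f : N → X, ∀ a b : N, dist (f a) (f b) = dist a b

/-- The triple `(a, b, c)` of nonnegative reals is metric: `|a - b| ≤ c ≤ a + b`. -/
def MetricTriple (a b c : ℝ) : Prop := |a - b| ≤ c ∧ c ≤ a + b

/-- `x ⤳ (a, b, c, d)`: the triples `(x,a,b)` and `(x,c,d)` are metric and
`a ≥ max {b, c, d}`. -/
def Leads (x a b c d : ℝ) : Prop :=
  MetricTriple x a b ∧ MetricTriple x c d ∧ b ≤ a ∧ c ≤ a ∧ d ≤ a

/-- The 4-values condition. -/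
def FourValues (R : Set ℝ) : Prop :=
  ∀ a b c d, a ∈ R → b ∈ R → c ∈ R → d ∈ R →
    (∃ x ∈ R, Leads x a b c d) → ∃ y ∈ R, Leads y a d c b

/-- `0` is a limit point of `R ⊆ [0, ∞)`. -/
def ZeroLimit (R : Set ℝ) : Prop := ∀ ε > 0, ∃ r ∈ R, 0 < r ∧ r < ε

/-- `d` is a metric on the type `α`. -/
def IsMetricOn {α : Type*} (d : α → α → ℝ) : Prop :=
  (∀ x, d x x = 0) ∧ (∀ x y, d x y = d y x) ∧
    (∀ x y z, d x z ≤ d x y + d y z) ∧ ∀ x y, d x y = 0 → x = y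

/-- A restricted type function of the metric space `X`: a positive real valued function on a
finite subset of `X`, compatible with the metric, with values in the distance set of `X`. -/
def IsRestrictedType (X : Type*) [MetricSpace X] (F : Set X) (t : F → ℝ) : Prop :=
  F.Finite ∧ (∀ x, 0 < t x) ∧
    (∀ x y : F, |t x - t y| ≤ dist (x : X) (y : X) ∧ dist (x : X) (y : X) ≤ t x + t y) ∧
    ∀ x, t x ∈ distSet X

/-- A Katětov function of the metric space `X`: a positive real valued function on a finite
subset of `X` whose one-point extension `Sp(k)` is isometric to a subspace of `X`. -/
def IsKatetov (X : Type*) [MetricSpace X] (F : Set X) (k : F → ℝ) : Prop :=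
  F.Finite ∧ (∀ x, 0 < k x) ∧
    ∃ (g : F → X) (p : X),
      (∀ x y : F, dist (g x) (g y) = dist (x : X) (y : X)) ∧ ∀ x : F, dist p (g x) = k x

/-- `p` realizes the type function `t` in `X`. -/
def Realizes {X : Type*} [MetricSpace X] (F : Set X) (t : F → ℝ) (p : X) : Prop :=
  ∀ x : F, dist p (x : X) = t x

/-!
The 4-values condition says that two metric triangles with sides in `R` sharing a side
can be amalgamated, the distance between their free vertices again lying in `R`. Hence every
`R`-valued Katětov function on a finite `R`-valued pseudometric space extends to one more point:
of the constraints on the new value only the two extreme ones matter, and amalgamating the two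
triangles they come from satisfies both.

Adding points to `ℕ` one at a time, point `m` realizing the `m`-th term of a sequence in which
every finite requirement recurs arbitrarily late, gives an `R`-valued pseudometric on `ℕ` that
realizes every Katětov function on a finite set. Its metric quotient is countable with distance
set `R`; realizability embeds finite spaces point by point and gives homogeneity by back and forth.
-/

open Set Function

lemma metricTriple_iff {a b c : ℝ} :
    MetricTriple a b c ↔ a ≤ b + c ∧ b ≤ a + c ∧ c ≤ a + b := by
  rw [MetricTriple, abs_sub_le_iff]
  constructor
  · rintro ⟨⟨h₁, h₂⟩, h₃⟩
    exact ⟨by linarith, by linarith, h₃⟩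
  · rintro ⟨h₁, h₂, h₃⟩
    exact ⟨⟨by linarith, by linarith⟩, h₃⟩

lemma MetricTriple.comm {a b c : ℝ} (h : MetricTriple a b c) : MetricTriple b a c := by
  obtain ⟨h₁, h₂, h₃⟩ := metricTriple_iff.1 h
  exact metricTriple_iff.2 ⟨h₂, h₁, by linarith⟩

lemma MetricTriple.swap {a b c : ℝ} (h : MetricTriple a b c) : MetricTriple a c b := by
  obtain ⟨h₁, h₂, h₃⟩ := metricTriple_iff.1 h
  exact metricTriple_iff.2 ⟨by linarith, by linarith, by linarith⟩

lemma metricTriple_self_zero {a : ℝ} (ha : 0 ≤ a) : MetricTriple a a 0 := by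
  simp [MetricTriple, ha]

lemma metricTriple_dist {X : Type*} [PseudoMetricSpace X] (x y z : X) :
    MetricTriple (dist x y) (dist x z) (dist y z) :=
  metricTriple_iff.2 ⟨dist_triangle_right .., dist_triangle .., dist_triangle_left ..⟩

theorem FourValues.exists_amalgam {R : Set ℝ} (h4 : FourValues R) {x f₀ f₁ g₀ g₁ : ℝ}
    (hx : x ∈ R) (hf₀ : f₀ ∈ R) (hf₁ : f₁ ∈ R) (hg₀ : g₀ ∈ R) (hg₁ : g₁ ∈ R)
    (hf : MetricTriple x f₀ f₁) (hg : MetricTriple x g₀ g₁) :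
    ∃ y ∈ R, MetricTriple f₀ g₀ y ∧ MetricTriple f₁ g₁ y := by
  wlog hfg : max g₀ g₁ ≤ max f₀ f₁ generalizing f₀ f₁ g₀ g₁
  · obtain ⟨y, hy, h₀, h₁⟩ := this hg₀ hg₁ hf₀ hf₁ hg hf (le_of_not_ge hfg)
    exact ⟨y, hy, h₀.comm, h₁.comm⟩
  wlog hf₁₀ : f₁ ≤ f₀ generalizing f₀ f₁ g₀ g₁
  · obtain ⟨y, hy, h₁, h₀⟩ := this hf₁ hf₀ hg₁ hg₀ hf.swap hg.swap
      (by rwa [max_comm g₁, max_comm f₁]) (le_of_not_ge hf₁₀)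
    exact ⟨y, hy, h₀, h₁⟩
  obtain ⟨hg₀f, hg₁f⟩ : g₀ ≤ f₀ ∧ g₁ ≤ f₀ := by rwa [max_eq_left hf₁₀, max_le_iff] at hfg
  obtain ⟨y, hy, hy₀, hy₁, -⟩ :=
    h4 f₀ f₁ g₁ g₀ hf₀ hf₁ hg₁ hg₀ ⟨x, hx, hf, hg.swap, hf₁₀, hg₁f, hg₀f⟩
  exact ⟨y, hy, hy₀.comm.swap, hy₁.swap.comm.swap⟩

section Katetov

variable {α : Type*} {R : Set ℝ} {d : α → α → ℝ} {s : Set α} {t : α → ℝ} {b : α}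

structure IsPseudometricOn (R : Set ℝ) (d : α → α → ℝ) (s : Set α) : Prop where
  mem : ∀ x ∈ s, ∀ y ∈ s, d x y ∈ R
  self : ∀ x ∈ s, d x x = 0
  comm : ∀ x ∈ s, ∀ y ∈ s, d x y = d y x
  triangle : ∀ x ∈ s, ∀ y ∈ s, ∀ z ∈ s, d x z ≤ d x y + d y z

structure IsKatetovOn (R : Set ℝ) (d : α → α → ℝ) (s : Set α) (t : α → ℝ) : Prop where
  mem : ∀ x ∈ s, t x ∈ R
  triple : ∀ x ∈ s, ∀ y ∈ s, MetricTriple (t x) (t y) (d x y)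

lemma IsPseudometricOn.mono {s' : Set α} (hd : IsPseudometricOn R d s) (h : s' ⊆ s) :
    IsPseudometricOn R d s' :=
  ⟨fun x hx y hy => hd.mem x (h hx) y (h hy), fun x hx => hd.self x (h hx),
    fun x hx y hy => hd.comm x (h hx) y (h hy),
    fun x hx y hy z hz => hd.triangle x (h hx) y (h hy) z (h hz)⟩

lemma IsPseudometricOn.congr {d' : α → α → ℝ} (hd : IsPseudometricOn R d s)
    (h : ∀ x ∈ s, ∀ y ∈ s, d' x y = d x y) : IsPseudometricOn R d' s where
  mem x hx y hy := h x hx y hy ▸ hd.mem x hx y hy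
  self x hx := (h x hx x hx).trans (hd.self x hx)
  comm x hx y hy := by rw [h x hx y hy, h y hy x hx, hd.comm x hx y hy]
  triangle x hx y hy z hz := by
    rw [h x hx z hz, h x hx y hy, h y hy z hz]; exact hd.triangle x hx y hy z hz

lemma IsPseudometricOn.metricTriple (hd : IsPseudometricOn R d s) {x y z : α} (hx : x ∈ s)
    (hy : y ∈ s) (hz : z ∈ s) : MetricTriple (d x y) (d x z) (d y z) := by
  have := hd.triangle x hx z hz y hy
  have := hd.triangle x hx y hy z hz
  have := hd.triangle y hy x hx z hz
  have := hd.comm z hz y hy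
  have := hd.comm y hy x hx
  exact metricTriple_iff.2 ⟨by linarith, by linarith, by linarith⟩

lemma IsKatetovOn.congr {d' : α → α → ℝ} {t' : α → ℝ} (ht : IsKatetovOn R d s t)
    (hd : ∀ x ∈ s, ∀ y ∈ s, d' x y = d x y) (heq : EqOn t' t s) : IsKatetovOn R d' s t' :=
  ⟨fun x hx => heq hx ▸ ht.mem x hx, fun x hx y hy => by
    rw [heq hx, heq hy, hd x hx y hy]; exact ht.triple x hx y hy⟩

theorem FourValues.exists_katetov_value (h4 : FourValues R) (h0 : (0 : ℝ) ∈ R) (hs : s.Finite)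
    (hd : IsPseudometricOn R d (insert b s)) (ht : IsKatetovOn R d s t) :
    ∃ y ∈ R, ∀ x ∈ s, MetricTriple (t x) y (d x b) := by
  rcases s.eq_empty_or_nonempty with rfl | hne
  · exact ⟨0, h0, by simp⟩
  obtain ⟨i, hi, hmax⟩ := s.exists_max_image (fun x => |t x - d x b|) hs hne
  obtain ⟨j, hj, hmin⟩ := s.exists_min_image (fun x => t x + d x b) hs hne
  have hi' := mem_insert_of_mem b hi
  have hj' := mem_insert_of_mem b hj
  obtain ⟨y, hy, hiy, hjy⟩ := h4.exists_amalgam (hd.mem i hi' j hj') (ht.mem i hi)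
    (ht.mem j hj) (hd.mem i hi' b (mem_insert b s)) (hd.mem j hj' b (mem_insert b s))
    (ht.triple i hi j hj).swap.comm (hd.metricTriple hi' hj' (mem_insert b s))
  refine ⟨y, hy, fun x hx => MetricTriple.swap ?_⟩
  exact ⟨(hmax x hx).trans hiy.1, hjy.2.trans (hmin x hx)⟩

lemma IsKatetovOn.update_insert [DecidableEq α] (hR : R ⊆ Ici 0)
    (hd : IsPseudometricOn R d (insert b s)) (ht : IsKatetovOn R d s t) (hb : b ∉ s) {y : ℝ}
    (hy : y ∈ R) (hyt : ∀ x ∈ s, MetricTriple (t x) y (d x b)) :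
    IsKatetovOn R d (insert b s) (update t b y) := by
  have hne : ∀ x ∈ s, x ≠ b := fun x hx h => hb (h ▸ hx)
  refine ⟨?_, ?_⟩
  · rintro x (rfl | hx)
    · rwa [update_self]
    · rw [update_of_ne (hne x hx)]; exact ht.mem x hx
  · rintro x (rfl | hx) z (rfl | hz)
    · rw [update_self, hd.self _ (mem_insert _ _)]; exact metricTriple_self_zero (hR hy)
    · rw [update_self, update_of_ne (hne z hz),
        hd.comm _ (mem_insert _ _) z (mem_insert_of_mem _ hz)]
      exact (hyt z hz).comm
    · rw [update_self, update_of_ne (hne x hx)]; exact hyt x hx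
    · rw [update_of_ne (hne x hx), update_of_ne (hne z hz)]; exact ht.triple x hx z hz

theorem FourValues.exists_katetov_extension [DecidableEq α] (h4 : FourValues R)
    (h0 : (0 : ℝ) ∈ R) (hR : R ⊆ Ici 0) {s' : Set α} (hs' : s'.Finite) (hss' : s ⊆ s')
    (hd : IsPseudometricOn R d s') (ht : IsKatetovOn R d s t) :
    ∃ t', IsKatetovOn R d s' t' ∧ EqOn t' t s := by
  rw [← union_sdiff_cancel hss']
  refine hs'.sdiff.induction_on_subset
    (motive := fun A _ => ∃ t', IsKatetovOn R d (s ∪ A) t' ∧ EqOn t' t s) _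
    ⟨t, by rwa [union_empty], fun _ _ => rfl⟩ ?_
  rintro a A ⟨has', has⟩ hA haA ⟨t', ht', heq⟩
  have hasA : a ∉ s ∪ A := fun h => h.elim has haA
  have hd' : IsPseudometricOn R d (insert a (s ∪ A)) :=
    hd.mono (insert_subset has' (union_subset hss' (hA.trans sdiff_subset)))
  obtain ⟨y, hy, hyt⟩ :=
    h4.exists_katetov_value h0 ((hs'.subset hss').union (hs'.sdiff.subset hA)) hd' ht'
  rw [union_insert]
  refine ⟨update t' a y, ht'.update_insert hR hd' hasA hy hyt, fun x hx => ?_⟩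
  rw [update_of_ne (ne_of_mem_of_not_mem hx has), heq hx]

def addPoint [DecidableEq α] (d : α → α → ℝ) (b : α) (t : α → ℝ) (x y : α) : ℝ :=
  if x = b then (if y = b then 0 else t y) else if y = b then t x else d x y

lemma IsPseudometricOn.addPoint_insert [DecidableEq α] (hR : R ⊆ Ici 0) (h0 : (0 : ℝ) ∈ R)
    (hd : IsPseudometricOn R d s) (ht : IsKatetovOn R d s t) (hb : b ∉ s) :
    IsPseudometricOn R (addPoint d b t) (insert b s) := by
  have hne : ∀ x ∈ s, x ≠ b := fun x hx h => hb (h ▸ hx)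
  have hnn : ∀ x ∈ s, 0 ≤ t x := fun x hx => hR (ht.mem x hx)
  have htri := fun x (hx : x ∈ s) y (hy : y ∈ s) => metricTriple_iff.1 (ht.triple x hx y hy)
  refine ⟨?_, ?_, ?_, ?_⟩
  · rintro x (rfl | hx) y (rfl | hy) <;> simp [addPoint, *, hd.mem, ht.mem]
  · rintro x (rfl | hx) <;> simp [addPoint, *, hd.self]
  · rintro x (rfl | hx) y (rfl | hy) <;> simp [addPoint, *, hd.comm]
  · rintro x (rfl | hx) y (rfl | hy) z (rfl | hz) <;> simp [addPoint, *]
    exacts [by linarith [htri x hx y hy], hd.triangle x hx y hy z hz]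

end Katetov

def ExtensionProperty {α : Type*} (R : Set ℝ) (d : α → α → ℝ) : Prop :=
  ∀ (ι : Type) [Finite ι] (a : ι → α) (t : ι → ℝ),
    IsKatetovOn R (fun i j => d (a i) (a j)) univ t → ∃ p, ∀ i, d p (a i) = t i

lemma ExtensionProperty.of_finite_sets {α : Type*} {R : Set ℝ} {d : α → α → ℝ}
    (hd : IsPseudometricOn R d univ)
    (h : ∀ s : Set α, s.Finite → ∀ t, IsKatetovOn R d s t → ∃ p, ∀ x ∈ s, d p x = t x) :
    ExtensionProperty R d := by
  classical
  intro ι _ a t ht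
  let t' : α → ℝ := fun x => if h : ∃ i, a i = x then t h.choose else 0
  have ht' : ∀ i, t' (a i) = t i := by
    intro i
    have h : ∃ j, a j = a i := ⟨i, rfl⟩
    have hzero := (ht.triple i trivial h.choose trivial).1
    simp only [h.choose_spec, hd.self _ trivial, abs_nonpos_iff, sub_eq_zero] at hzero
    simp only [t', dif_pos h, hzero]
  have hkat : IsKatetovOn R d (range a) t' := by
    refine ⟨?_, ?_⟩
    · rintro _ ⟨i, rfl⟩
      rw [ht']
      exact ht.mem i trivial
    · rintro _ ⟨i, rfl⟩ _ ⟨j, rfl⟩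
      rw [ht', ht']
      exact ht.triple i trivial j trivial
  obtain ⟨p, hp⟩ := h (range a) (finite_range a) t' hkat
  exact ⟨p, fun i => (hp _ (mem_range_self i)).trans (ht' i)⟩

theorem exists_recurrent_seq {β : Type*} [Countable β] [Nonempty β] :
    ∃ τ : ℕ → β, ∀ b n, ∃ m ≥ n, τ m = b := by
  obtain ⟨σ, hσ⟩ := exists_surjective_nat β
  refine ⟨fun m => σ (Nat.unpair m).1, fun b n => ?_⟩
  obtain ⟨k, rfl⟩ := hσ b
  exact ⟨Nat.pair k n, Nat.right_le_pair k n, by simp⟩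

section Construction

variable {R : Set ℝ} {τ : ℕ → Σ n, Fin n → R} {d : ℕ → ℕ → ℝ} {m : ℕ}

/-- A requirement `⟨n, v⟩` asks for a point at distance `v i` from each point `i < n`. -/
def prescribedRow (T : Σ n, Fin n → R) (i : ℕ) : ℝ :=
  if h : i < T.1 then T.2 ⟨i, h⟩ else 0

def IsAdmissibleRow (d : ℕ → ℕ → ℝ) (m : ℕ) (T : Σ n, Fin n → R) (t : ℕ → ℝ) : Prop :=
  IsKatetovOn R d (Iio m) t ∧
    (T.1 ≤ m → IsKatetovOn R d (Iio T.1) (prescribedRow T) →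
      EqOn t (prescribedRow T) (Iio T.1))

noncomputable def nextRow (τ : ℕ → Σ n, Fin n → R) (d : ℕ → ℕ → ℝ) (m : ℕ) : ℕ → ℝ :=
  Classical.epsilon (IsAdmissibleRow d m (τ m))

/-- Point `m` joins at stage `m + 1`; only the entries of `stage τ m` below `m` are meaningful. -/
noncomputable def stage (τ : ℕ → Σ n, Fin n → R) : ℕ → ℕ → ℕ → ℝ
  | 0 => fun _ _ => 0
  | m + 1 => addPoint (stage τ m) m (nextRow τ (stage τ m) m)

noncomputable def limitDist (τ : ℕ → Σ n, Fin n → R) (a b : ℕ) : ℝ :=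
  stage τ (max a b + 1) a b

lemma exists_admissibleRow (h4 : FourValues R) (h0 : (0 : ℝ) ∈ R) (hR : R ⊆ Ici 0)
    (hd : IsPseudometricOn R d (Iio m)) (T : Σ n, Fin n → R) :
    ∃ t, IsAdmissibleRow d m T t := by
  by_cases hT : T.1 ≤ m ∧ IsKatetovOn R d (Iio T.1) (prescribedRow T)
  · obtain ⟨t, ht, heq⟩ := h4.exists_katetov_extension h0 hR (finite_Iio m)
      (Iio_subset_Iio hT.1) hd hT.2
    exact ⟨t, ht, fun _ _ => heq⟩
  · obtain ⟨t, ht, -⟩ := h4.exists_katetov_extension h0 hR (t := 0) (finite_Iio m)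
      (empty_subset _) hd ⟨by simp, by simp⟩
    exact ⟨t, ht, fun h₁ h₂ => absurd ⟨h₁, h₂⟩ hT⟩

lemma isAdmissibleRow_nextRow (h4 : FourValues R) (h0 : (0 : ℝ) ∈ R) (hR : R ⊆ Ici 0)
    (hd : IsPseudometricOn R d (Iio m)) : IsAdmissibleRow d m (τ m) (nextRow τ d m) :=
  Classical.epsilon_spec (exists_admissibleRow h4 h0 hR hd (τ m))

lemma stage_succ_of_lt {a b : ℕ} (ha : a < m) (hb : b < m) :
    stage τ (m + 1) a b = stage τ m a b := by
  simp [stage, addPoint, ha.ne, hb.ne]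

lemma stage_succ_self_left {a : ℕ} (ha : a < m) :
    stage τ (m + 1) m a = nextRow τ (stage τ m) m a := by
  simp [stage, addPoint, ha.ne]

lemma stage_eq_of_le {m' a b : ℕ} (h : m ≤ m') (ha : a < m) (hb : b < m) :
    stage τ m' a b = stage τ m a b := by
  induction m', h using Nat.le_induction with
  | base => rfl
  | succ k hk ih => rw [stage_succ_of_lt (by omega) (by omega), ih]

lemma limitDist_eq_stage {a b : ℕ} (ha : a < m) (hb : b < m) :
    limitDist τ a b = stage τ m a b := by
  rcases le_total m (max a b + 1) with h | h
  · exact stage_eq_of_le h ha hb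
  · exact (stage_eq_of_le h (by omega) (by omega)).symm

lemma isPseudometricOn_stage (h4 : FourValues R) (h0 : (0 : ℝ) ∈ R) (hR : R ⊆ Ici 0) :
    ∀ m, IsPseudometricOn R (stage τ m) (Iio m)
  | 0 => ⟨by simp, by simp, by simp, by simp⟩
  | m + 1 => by
    have hd := isPseudometricOn_stage h4 h0 hR m
    rw [← Order.succ_eq_add_one, Iio_succ_eq_Iic, ← Iio_insert]
    exact hd.addPoint_insert hR h0 (isAdmissibleRow_nextRow h4 h0 hR hd).1 (lt_irrefl m)

lemma isPseudometricOn_limitDist (h4 : FourValues R) (h0 : (0 : ℝ) ∈ R) (hR : R ⊆ Ici 0) :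
    IsPseudometricOn R (limitDist τ) univ := by
  have h m : IsPseudometricOn R (limitDist τ) (Iio m) :=
    (isPseudometricOn_stage h4 h0 hR m).congr fun x hx y hy => limitDist_eq_stage hx hy
  refine ⟨fun x _ y _ => ?_, fun x _ => ?_, fun x _ y _ => ?_, fun x _ y _ z _ => ?_⟩
  · exact (h (x + y + 1)).mem x (mem_Iio.2 (by omega)) y (mem_Iio.2 (by omega))
  · exact (h (x + 1)).self x (by simp)
  · exact (h (x + y + 1)).comm x (mem_Iio.2 (by omega)) y (mem_Iio.2 (by omega))
  · exact (h (x + y + z + 1)).triangle x (mem_Iio.2 (by omega)) y (mem_Iio.2 (by omega))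
      z (mem_Iio.2 (by omega))

lemma limitDist_realizes (h4 : FourValues R) (h0 : (0 : ℝ) ∈ R) (hR : R ⊆ Ici 0)
    (hτ : ∀ T n, ∃ m ≥ n, τ m = T) {s : Set ℕ} (hs : s.Finite) {t : ℕ → ℝ}
    (ht : IsKatetovOn R (limitDist τ) s t) : ∃ p, ∀ x ∈ s, limitDist τ p x = t x := by
  obtain ⟨n, hn⟩ := hs.bddAbove
  have hsn : s ⊆ Iio (n + 1) := fun x hx => Nat.lt_succ_of_le (hn hx)
  obtain ⟨t', ht', heq⟩ := h4.exists_katetov_extension h0 hR (finite_Iio _) hsn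
    ((isPseudometricOn_limitDist h4 h0 hR).mono (subset_univ _)) ht
  obtain ⟨m, hnm, hm⟩ := hτ ⟨n + 1, fun i => ⟨t' i, ht'.mem i i.2⟩⟩ (n + 1)
  have hpres : EqOn (prescribedRow (τ m)) t' (Iio (n + 1)) := by
    intro i hi
    rw [hm]
    simp [prescribedRow, show i < n + 1 from hi]
  have hlen : (τ m).1 = n + 1 := by rw [hm]
  have hkat : IsKatetovOn R (stage τ m) (Iio (τ m).1) (prescribedRow (τ m)) := by
    rw [hlen]
    exact ht'.congr (fun x hx y hy =>
      (limitDist_eq_stage (lt_of_lt_of_le hx hnm) (lt_of_lt_of_le hy hnm)).symm) hpres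
  have hrow := (isAdmissibleRow_nextRow h4 h0 hR (isPseudometricOn_stage h4 h0 hR m)).2
    (hlen ▸ hnm) hkat
  refine ⟨m, fun x hx => ?_⟩
  have hx' : x < n + 1 := hsn hx
  calc limitDist τ m x = stage τ (m + 1) m x := limitDist_eq_stage (by omega) (by omega)
    _ = nextRow τ (stage τ m) m x := stage_succ_self_left (by omega)
    _ = prescribedRow (τ m) x := hrow (by rw [hlen]; exact hx')
    _ = t' x := hpres hx'
    _ = t x := heq hx

theorem exists_pseudometric_nat_extensionProperty (h4 : FourValues R) (h0 : (0 : ℝ) ∈ R)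
    (hR : R ⊆ Ici 0) (hcount : R.Countable) :
    ∃ d : ℕ → ℕ → ℝ, IsPseudometricOn R d univ ∧ ExtensionProperty R d := by
  have := hcount.to_subtype
  have : Nonempty (Σ n, Fin n → R) := ⟨⟨0, Fin.elim0⟩⟩
  obtain ⟨τ, hτ⟩ := exists_recurrent_seq (β := Σ n, Fin n → R)
  have hd := isPseudometricOn_limitDist (τ := τ) h4 h0 hR
  exact ⟨limitDist τ, hd,
    .of_finite_sets hd fun s hs t ht => limitDist_realizes h4 h0 hR hτ hs ht⟩

end Construction

theorem ExtensionProperty.exists_metricSpace {α : Type} [Countable α] [Nonempty α]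
    {R : Set ℝ} {d : α → α → ℝ} (hd : IsPseudometricOn R d univ) (hext : ExtensionProperty R d) :
    ∃ (X : Type) (_ : MetricSpace X), Countable X ∧ Nonempty X ∧ (∀ x y : X, dist x y ∈ R) ∧
      ExtensionProperty R (dist : X → X → ℝ) := by
  let : PseudoMetricSpace α :=
    { dist := d
      dist_self := fun x => hd.self x trivial
      dist_comm := fun x y => hd.comm x trivial y trivial
      dist_triangle := fun x y z => hd.triangle x trivial y trivial z trivial }
  refine ⟨SeparationQuotient α, inferInstance, SeparationQuotient.surjective_mk.countable,
    inferInstance,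
    SeparationQuotient.surjective_mk.forall₂.2 fun x y => hd.mem x trivial y trivial,
    fun ι _ a t ht => ?_⟩
  choose a' ha' using fun i => SeparationQuotient.surjective_mk (a i)
  have ht' : IsKatetovOn R (fun i j => dist (a' i) (a' j)) univ t := by
    simpa only [← ha', SeparationQuotient.dist_mk] using ht
  obtain ⟨p, hp⟩ := hext ι a' t ht'
  exact ⟨SeparationQuotient.mk p, fun i => by rw [← ha', SeparationQuotient.dist_mk]; exact hp i⟩

section MetricSpace

variable {X : Type} [MetricSpace X] {R : Set ℝ}

def IsPartialIsometry (P : Set (X × X)) : Prop :=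
  ∀ p ∈ P, ∀ q ∈ P, dist p.1 q.1 = dist p.2 q.2

lemma IsPartialIsometry.image_swap {P : Set (X × X)} (hP : IsPartialIsometry P) :
    IsPartialIsometry (Prod.swap '' P) := by
  rintro _ ⟨p, hp, rfl⟩ _ ⟨q, hq, rfl⟩
  exact (hP p hp q hq).symm

lemma IsPartialIsometry.insert_pair {P : Set (X × X)} (hP : IsPartialIsometry P) {x y : X}
    (hxy : ∀ q ∈ P, dist x q.1 = dist y q.2) : IsPartialIsometry (insert (x, y) P) := by
  rintro p (rfl | hp) q (rfl | hq)
  · simp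
  · exact hxy q hq
  · rw [dist_comm, hxy p hp, dist_comm]
  · exact hP p hp q hq

lemma IsPartialIsometry.iUnion_of_monotone {C : ℕ → Set (X × X)} (hmono : Monotone C)
    (hC : ∀ n, IsPartialIsometry (C n)) : IsPartialIsometry (⋃ n, C n) := by
  simp only [IsPartialIsometry, mem_iUnion]
  rintro p ⟨i, hp⟩ q ⟨j, hq⟩
  exact hC (max i j) p (hmono (le_max_left i j) hp) q (hmono (le_max_right i j) hq)

lemma IsPartialIsometry.exists_isometryEquiv {P : Set (X × X)} (hP : IsPartialIsometry P)
    (hdom : ∀ x, ∃ y, (x, y) ∈ P) (hran : ∀ y, ∃ x, (x, y) ∈ P) :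
    ∃ g : X ≃ᵢ X, ∀ p ∈ P, g p.1 = p.2 := by
  choose g hg using hdom
  have hgP : ∀ p ∈ P, g p.1 = p.2 := fun p hp =>
    dist_eq_zero.1 ((hP _ (hg p.1) p hp).symm.trans (dist_self _))
  have hiso : Isometry g := Isometry.of_dist_eq fun x y => (hP _ (hg x) _ (hg y)).symm
  have hsurj : Surjective g := fun y => (hran y).imp fun x hx => hgP _ hx
  exact ⟨⟨Equiv.ofBijective g ⟨hiso.injective, hsurj⟩, hiso⟩, hgP⟩

lemma IsPartialIsometry.exists_forth_back
    (hforth : ∀ P : Set (X × X), P.Finite → IsPartialIsometry P →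
      ∀ x, ∃ y, ∀ q ∈ P, dist x q.1 = dist y q.2)
    {P : Set (X × X)} (hPf : P.Finite) (hP : IsPartialIsometry P) (z : X) :
    ∃ P' : Set (X × X), (P'.Finite ∧ IsPartialIsometry P') ∧
      P ⊆ P' ∧ (∃ y, (z, y) ∈ P') ∧ ∃ x, (x, z) ∈ P' := by
  obtain ⟨y, hy⟩ := hforth P hPf hP z
  have hP₁ := hP.insert_pair hy
  obtain ⟨x, hx⟩ := hforth _ ((hPf.insert _).image Prod.swap) hP₁.image_swap z
  refine ⟨insert (x, z) (insert (z, y) P), ⟨(hPf.insert _).insert _,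
    hP₁.insert_pair fun q hq => (hx q.swap (mem_image_of_mem _ hq)).symm⟩,
    (subset_insert _ _).trans (subset_insert _ _), ⟨y, mem_insert_of_mem _ (mem_insert _ _)⟩,
    ⟨x, mem_insert _ _⟩⟩

theorem isHomogeneous_of_forth [Countable X]
    (hforth : ∀ P : Set (X × X), P.Finite → IsPartialIsometry P →
      ∀ x, ∃ y, ∀ q ∈ P, dist x q.1 = dist y q.2) :
    IsHomogeneous X := by
  intro F hF f hf
  rcases isEmpty_or_nonempty X with hX | hX
  · exact ⟨IsometryEquiv.refl X, fun x => isEmptyElim (x : X)⟩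
  obtain ⟨u, hu⟩ := exists_surjective_nat X
  have := hF.to_subtype
  choose next hnext using fun n (P : {P : Set (X × X) // P.Finite ∧ IsPartialIsometry P}) =>
    IsPartialIsometry.exists_forth_back hforth P.2.1 P.2.2 (u n)
  let C : ℕ → {P : Set (X × X) // P.Finite ∧ IsPartialIsometry P} := fun n =>
    Nat.rec ⟨range fun x : F => ((x : X), f x), finite_range _,
        by rintro _ ⟨x, rfl⟩ _ ⟨y, rfl⟩; exact (hf x y).symm⟩
      (fun n P => ⟨next n P, (hnext n P).1⟩) n
  have hG : IsPartialIsometry (⋃ n, (C n).1) :=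
    .iUnion_of_monotone (monotone_nat_of_le_succ fun n => (hnext n (C n)).2.1) fun n => (C n).2.2
  obtain ⟨g, hg⟩ := hG.exists_isometryEquiv
    (fun x => by
      obtain ⟨n, rfl⟩ := hu x
      obtain ⟨y, hy⟩ := (hnext n (C n)).2.2.1
      exact ⟨y, mem_iUnion.2 ⟨n + 1, hy⟩⟩)
    (fun y => by
      obtain ⟨n, rfl⟩ := hu y
      obtain ⟨x, hx⟩ := (hnext n (C n)).2.2.2
      exact ⟨x, mem_iUnion.2 ⟨n + 1, hx⟩⟩)
  exact ⟨g, fun x => hg _ (mem_iUnion.2 ⟨0, mem_range_self x⟩)⟩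

theorem ExtensionProperty.exists_forth (hX : ∀ x y : X, dist x y ∈ R)
    (hext : ExtensionProperty R (dist : X → X → ℝ)) {P : Set (X × X)} (hPf : P.Finite)
    (hP : IsPartialIsometry P) (x : X) : ∃ y, ∀ q ∈ P, dist x q.1 = dist y q.2 := by
  have := hPf.to_subtype
  obtain ⟨y, hy⟩ := hext P (fun q => q.1.2) (fun q => dist x q.1.1)
    ⟨fun q _ => hX _ _, fun q _ q' _ => by
      simpa only [hP q q.2 q' q'.2] using metricTriple_dist x q.1.1 q'.1.1⟩
  exact ⟨y, fun q hq => (hy ⟨q, hq⟩).symm⟩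

theorem ExtensionProperty.exists_isometric_embedding [Nonempty X]
    (hext : ExtensionProperty R (dist : X → X → ℝ)) (F : Type) [MetricSpace F] [Finite F]
    (hF : ∀ a b : F, dist a b ∈ R) : ∃ f : F → X, ∀ a b, dist (f a) (f b) = dist a b := by
  classical
  suffices ∀ s : Set F, s.Finite → ∃ f : F → X, ∀ a ∈ s, ∀ b ∈ s, dist (f a) (f b) = dist a b by
    simpa using this univ finite_univ
  intro s hs
  induction s, hs using Set.Finite.induction_on with
  | empty => exact ⟨fun _ => Classical.arbitrary X, by simp⟩
  | @insert a s ha hs ih =>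
    obtain ⟨f, hf⟩ := ih
    have := hs.to_subtype
    obtain ⟨p, hp⟩ := hext s (fun b => f b) (fun b => dist a b)
      ⟨fun b _ => hF a b, fun b _ c _ => by
        simpa only [hf b b.2 c c.2] using metricTriple_dist a b c⟩
    have hne : ∀ b ∈ s, b ≠ a := fun b hb h => ha (h ▸ hb)
    refine ⟨update f a p, ?_⟩
    rintro b (rfl | hb) c (rfl | hc)
    · simp
    · rw [update_self, update_of_ne (hne c hc)]
      exact hp ⟨c, hc⟩
    · rw [update_self, update_of_ne (hne b hb), dist_comm, hp ⟨b, hb⟩, dist_comm]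
    · rw [update_of_ne (hne b hb), update_of_ne (hne c hc)]
      exact hf b hb c hc

theorem ExtensionProperty.distSet_eq [Nonempty X] (hR : R ⊆ Ici 0)
    (hX : ∀ x y : X, dist x y ∈ R) (hext : ExtensionProperty R (dist : X → X → ℝ)) :
    distSet X = R := by
  refine Subset.antisymm (by rintro _ ⟨x, y, rfl⟩; exact hX x y) fun r hr => ?_
  obtain ⟨x⟩ := ‹Nonempty X›
  obtain ⟨p, hp⟩ := hext Unit (fun _ => x) (fun _ => r)
    ⟨fun _ _ => hr, fun _ _ _ _ => by simpa using metricTriple_self_zero (hR hr)⟩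
  exact ⟨p, x, hp ()⟩

end MetricSpace

/-- For every countable `R ⊆ [0,∞)` with `0 ∈ R` satisfying the 4-values
condition there exists a countable universal metric space with distance set `R`. -/
theorem statement8 (R : Set ℝ) (hR : R ⊆ Set.Ici 0) (h0 : (0 : ℝ) ∈ R)
    (hcount : R.Countable) (h4 : FourValues R) :
    ∃ (X : Type) (inst : MetricSpace X),
      Countable X ∧ @IsUniversal X inst ∧ @distSet X inst = R := by
  obtain ⟨d, hd, hext⟩ := exists_pseudometric_nat_extensionProperty h4 h0 hR hcount
  obtain ⟨X, _, hXc, hXne, hXR, hXext⟩ := hext.exists_metricSpace hd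
  have hdist := hXext.distSet_eq hR hXR
  refine ⟨X, inferInstance, hXc, ⟨?_, fun F _ _ hF => ?_⟩, hdist⟩
  · exact isHomogeneous_of_forth fun P hPf hP => hXext.exists_forth hXR hPf hP
  · exact hXext.exists_isometric_embedding F fun a b => hdist ▸ hF ⟨a, b, rfl⟩
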